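/- For every rooted tree T, the rows of A_T and the rows of B_T span the same ℚ-linear subspace of the space of row vectors indexed by the 2-element subsets of {0,…,n}; that is, rowspan(A_T) = rowspan(B_T) over ℚ. -/
import Mathlib


attribute [local instance] Classical.propDecidable

/-- A rooted tree on leaves `0, …, n`, rooted at the leaf `0`, with all edges directed
away from the root, no vertices of degree two, together with its (uniquely determined)
most-recent-common-ancestor function `lca` on leaf labels.  The parent map `par` sends
every non-root vertex to the vertex its unique incoming edge comes from, and fixes the
root.  A vertex `u` is a descendant of `v` iff some iterate of `par` sends `u` to `v`. -/
structure PhyloTree where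
  n : ℕ
  hn : 1 ≤ n
  V : Type
  fintypeV : Fintype V
  leaf : Fin (n + 1) ↪ V
  par : V → V
  par_root : par (leaf 0) = leaf 0
  par_ne : ∀ v : V, v ≠ leaf 0 → par v ≠ v
  reaches_root : ∀ v : V, ∃ k : ℕ, par^[k] v = leaf 0
  leaf_iff : ∀ v : V, v ≠ leaf 0 → (v ∈ Set.range leaf ↔ ∀ u, par u ≠ v)
  root_unique_child : ∃! u : V, u ≠ leaf 0 ∧ par u = leaf 0
  no_degree_two : ∀ v : V, v ∉ Set.range leaf → ∃ u w : V, u ≠ w ∧ par u = v ∧ par w = v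
  lca : Fin (n + 1) → Fin (n + 1) → V
  lca_anc_left : ∀ i j, ∃ k : ℕ, par^[k] (leaf i) = lca i j
  lca_anc_right : ∀ i j, ∃ k : ℕ, par^[k] (leaf j) = lca i j
  lca_min : ∀ i j (w : V), (∃ k : ℕ, par^[k] (leaf i) = w) →
      (∃ k : ℕ, par^[k] (leaf j) = w) → ∃ k : ℕ, par^[k] (lca i j) = w

instance (T : PhyloTree) : Fintype T.V := T.fintypeV

/-- `T.isAnc v u` : `v` is an ancestor of `u`, i.e. `u` is a descendant of `v`
(every vertex is a descendant of itself). -/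
def PhyloTree.isAnc (T : PhyloTree) (v u : T.V) : Prop := ∃ k : ℕ, T.par^[k] u = v

/-- The 2-element subsets `{i,j}` of `{0, …, n}`, encoded as ordered pairs `i < j`. -/
abbrev PairIdx (n : ℕ) := {q : Fin (n + 1) × Fin (n + 1) // q.1 < q.2}

/-- The non-root vertices of `T`; these index the rows of `A_T`, and are also in
bijection `v ↦ e(v)` with the edges of `T`, so they also index the rows of `B_T`. -/
abbrev PhyloTree.NR (T : PhyloTree) := {v : T.V // v ≠ T.leaf 0}

/-- The matrix `A_T`, with rows indexed by non-root vertices and columns indexed by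
2-element subsets `{i,j}` of `{0, …, n}`: the entry is `1` if `v = i`, `v = j` or
`v = lca(i,j)`, and `0` otherwise. -/
noncomputable def Amat (T : PhyloTree) (R : Type*) [Zero R] [One R] :
    Matrix T.NR (PairIdx T.n) R :=
  Matrix.of fun v s =>
    if v.1 = T.leaf s.1.1 ∨ v.1 = T.leaf s.1.2 ∨ v.1 = T.lca s.1.1 s.1.2 then 1 else 0

/-- `T.onPath v i j` : the edge `e(v)` lies on the unique path between the leaves
`i` and `j`, i.e. `v` lies strictly below `lca(i,j)` on the segment from `lca(i,j)`
down to `i` or on the segment from `lca(i,j)` down to `j`. -/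
def PhyloTree.onPath (T : PhyloTree) (v : T.V) (i j : Fin (T.n + 1)) : Prop :=
  v ≠ T.lca i j ∧ T.isAnc (T.lca i j) v ∧ (T.isAnc v (T.leaf i) ∨ T.isAnc v (T.leaf j))

/-- The matrix `B_T`, with rows indexed by the edges `e(v)` of `T` (equivalently, by the
non-root vertices `v`) and columns indexed by 2-element subsets `{i,j}` of `{0, …, n}`:
the entry is `1` if `e(v) ∈ P(i,j)` and `0` otherwise. -/
noncomputable def Bmat (T : PhyloTree) (R : Type*) [Zero R] [One R] :
    Matrix T.NR (PairIdx T.n) R :=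
  Matrix.of fun v s => if T.onPath v.1 s.1.1 s.1.2 then 1 else 0

/-- The monomial map `φ_M` associated to a nonnegative-integer matrix `M`, sending
`p_c` to `∏_r t_r ^ M(r,c)`. -/
noncomputable def toricMap {R C : Type*} [Fintype R] (M : Matrix R C ℕ) :
    MvPolynomial C ℂ →ₐ[ℂ] MvPolynomial R ℂ :=
  MvPolynomial.aeval fun c => ∏ r : R, MvPolynomial.X r ^ M r c
namespace PhyloTree

variable (T : PhyloTree)

lemma isAnc_refl (v : T.V) : T.isAnc v v := ⟨0, rfl⟩

lemma isAnc_trans {a b c : T.V} (h1 : T.isAnc a b) (h2 : T.isAnc b c) : T.isAnc a c := by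
  obtain ⟨k, hk⟩ := h1; obtain ⟨m, hm⟩ := h2
  exact ⟨k + m, by rw [Function.iterate_add_apply, hm, hk]⟩

lemma iterate_root (k : ℕ) : T.par^[k] (T.leaf 0) = T.leaf 0 := by
  induction k with
  | zero => rfl
  | succ k ih => rw [Function.iterate_succ_apply', ih, T.par_root]

lemma eq_root_of_cycle {v : T.V} {m : ℕ} (hm : 1 ≤ m) (h : T.par^[m] v = v) :
    v = T.leaf 0 := by
  obtain ⟨K, hK⟩ := T.reaches_root v
  have hmul : ∀ t : ℕ, T.par^[t * m] v = v := by
    intro t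
    induction t with
    | zero => simp
    | succ t ih => rw [Nat.succ_mul, Function.iterate_add_apply, h, ih]
  have hle : K ≤ K * m := Nat.le_mul_of_pos_right K (by omega)
  calc v = T.par^[K * m] v := (hmul K).symm
    _ = T.par^[(K * m - K) + K] v := by rw [Nat.sub_add_cancel hle]
    _ = T.par^[K * m - K] (T.par^[K] v) := Function.iterate_add_apply _ _ _ _
    _ = T.leaf 0 := by rw [hK, T.iterate_root]

lemma isAnc_antisymm {a b : T.V} (h1 : T.isAnc a b) (h2 : T.isAnc b a) : a = b := by
  obtain ⟨k, hk⟩ := h1; obtain ⟨m, hm⟩ := h2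
  rcases Nat.eq_zero_or_pos (m + k) with h0 | hpos
  · have hk0 : k = 0 := by omega
    subst hk0; exact hk.symm
  · have hb : T.par^[m + k] b = b := by rw [Function.iterate_add_apply, hk, hm]
    have hbroot : b = T.leaf 0 := T.eq_root_of_cycle hpos hb
    rw [← hk, hbroot, T.iterate_root]

lemma isAnc_total {a b u : T.V} (h1 : T.isAnc a u) (h2 : T.isAnc b u) :
    T.isAnc a b ∨ T.isAnc b a := by
  obtain ⟨k, hk⟩ := h1; obtain ⟨m, hm⟩ := h2
  rcases le_total k m with h | h
  · right
    exact ⟨m - k, by rw [← hk, ← Function.iterate_add_apply, Nat.sub_add_cancel h, hm]⟩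
  · left
    exact ⟨k - m, by rw [← hm, ← Function.iterate_add_apply, Nat.sub_add_cancel h, hk]⟩

lemma eq_of_leaf_anc {ℓ : Fin (T.n + 1)} (hℓ : ℓ ≠ 0) {u : T.V}
    (h : T.isAnc (T.leaf ℓ) u) : u = T.leaf ℓ := by
  obtain ⟨k, hk⟩ := h
  cases k with
  | zero => exact hk
  | succ k =>
    exfalso
    have hne : T.leaf ℓ ≠ T.leaf 0 := fun h' => hℓ (T.leaf.injective h')
    have hnp := (T.leaf_iff _ hne).mp ⟨ℓ, rfl⟩ (T.par^[k] u)
    rw [Function.iterate_succ_apply'] at hk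
    exact hnp hk

lemma leaf_eq_of_leaf_anc_leaf {ℓ m : Fin (T.n + 1)} (hℓ : ℓ ≠ 0)
    (h : T.isAnc (T.leaf ℓ) (T.leaf m)) : m = ℓ :=
  T.leaf.injective (T.eq_of_leaf_anc hℓ h)

lemma anc_lca_iff {v : T.V} {i j : Fin (T.n + 1)} :
    T.isAnc v (T.lca i j) ↔ T.isAnc v (T.leaf i) ∧ T.isAnc v (T.leaf j) := by
  constructor
  · intro h
    exact ⟨T.isAnc_trans h (T.lca_anc_left i j), T.isAnc_trans h (T.lca_anc_right i j)⟩
  · rintro ⟨h1, h2⟩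
    exact T.lca_min i j v h1 h2

lemma child_cover {v u : T.V} (h : T.isAnc v u) (hne : u ≠ v) :
    ∃ w, T.par w = v ∧ T.isAnc w u := by
  obtain ⟨k, hk⟩ := h
  cases k with
  | zero => exact absurd hk hne
  | succ k =>
    rw [Function.iterate_succ_apply'] at hk
    exact ⟨T.par^[k] u, hk, ⟨k, rfl⟩⟩

lemma not_anc_parent {v w : T.V} (hpar : T.par w = v) (hv : v ≠ T.leaf 0) :
    ¬ T.isAnc w v := by
  rintro ⟨k, hk⟩
  apply hv
  apply T.eq_root_of_cycle (m := k + 1) (by omega)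
  rw [Function.iterate_succ_apply', hk, hpar]

lemma child_eq_of_anc {v w w' : T.V} (hv : v ≠ T.leaf 0)
    (hw : T.par w = v) (hw' : T.par w' = v) (h : T.isAnc w w') : w = w' := by
  obtain ⟨m, hm⟩ := h
  cases m with
  | zero => exact hm.symm
  | succ m =>
    exfalso
    apply hv
    apply T.eq_root_of_cycle (m := m + 1) (by omega)
    calc T.par^[m+1] v = T.par^[m+1] (T.par w') := by rw [hw']
      _ = T.par^[m+1+1] w' := (Function.iterate_succ_apply T.par (m+1) w').symm
      _ = T.par (T.par^[m+1] w') := Function.iterate_succ_apply' T.par (m+1) w'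
      _ = T.par w := by rw [hm]
      _ = v := hw

lemma child_unique {v w w' u : T.V} (hv : v ≠ T.leaf 0)
    (hw : T.par w = v) (hw' : T.par w' = v)
    (h1 : T.isAnc w u) (h2 : T.isAnc w' u) : w = w' := by
  rcases T.isAnc_total h1 h2 with h | h
  · exact T.child_eq_of_anc hv hw hw' h
  · exact (T.child_eq_of_anc hv hw' hw h).symm

lemma onPath_iff {v : T.V} {i j : Fin (T.n + 1)} :
    T.onPath v i j ↔ ((T.isAnc v (T.leaf i) ∧ ¬ T.isAnc v (T.leaf j)) ∨
      (¬ T.isAnc v (T.leaf i) ∧ T.isAnc v (T.leaf j))) := by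
  constructor
  · rintro ⟨hne, hanc, hij⟩
    have hnot : ¬ (T.isAnc v (T.leaf i) ∧ T.isAnc v (T.leaf j)) := by
      rintro ⟨h1, h2⟩
      exact hne (T.isAnc_antisymm (T.anc_lca_iff.mpr ⟨h1, h2⟩) hanc)
    tauto
  · rintro (⟨h1, h2⟩ | ⟨h1, h2⟩)
    · refine ⟨?_, ?_, Or.inl h1⟩
      · rintro rfl; exact h2 (T.lca_anc_right i j)
      · rcases T.isAnc_total (T.lca_anc_left i j) h1 with h | h
        · exact h
        · exact absurd (T.isAnc_trans h (T.lca_anc_right i j)) h2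
    · refine ⟨?_, ?_, Or.inr h2⟩
      · rintro rfl; exact h1 (T.lca_anc_left i j)
      · rcases T.isAnc_total (T.lca_anc_right i j) h2 with h | h
        · exact h
        · exact absurd (T.isAnc_trans h (T.lca_anc_left i j)) h1

lemma lca_ne_leaf {i j ℓ : Fin (T.n + 1)} (hij : i ≠ j) (hℓ : ℓ ≠ 0) :
    T.lca i j ≠ T.leaf ℓ := by
  intro h
  have h1 : i = ℓ := T.leaf_eq_of_leaf_anc_leaf hℓ (by rw [← h]; exact T.lca_anc_left i j)
  have h2 : j = ℓ := T.leaf_eq_of_leaf_anc_leaf hℓ (by rw [← h]; exact T.lca_anc_right i j)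
  exact hij (h1.trans h2.symm)

lemma row_leaf_eq {ℓ : Fin (T.n + 1)} (hℓ : ℓ ≠ 0) (v : T.NR) (hvl : v.1 = T.leaf ℓ) :
    Amat T ℚ v = Bmat T ℚ v := by
  funext s
  obtain ⟨⟨i, j⟩, hij⟩ := s
  have hij' : i ≠ j := ne_of_lt hij
  have hAi : T.isAnc (T.leaf ℓ) (T.leaf i) ↔ ℓ = i :=
    ⟨fun h => (T.leaf_eq_of_leaf_anc_leaf hℓ h).symm, fun h => by rw [h]; exact T.isAnc_refl _⟩
  have hAj : T.isAnc (T.leaf ℓ) (T.leaf j) ↔ ℓ = j :=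
    ⟨fun h => (T.leaf_eq_of_leaf_anc_leaf hℓ h).symm, fun h => by rw [h]; exact T.isAnc_refl _⟩
  have hiff : (v.1 = T.leaf i ∨ v.1 = T.leaf j ∨ v.1 = T.lca i j) ↔ T.onPath v.1 i j := by
    rw [hvl, T.onPath_iff, hAi, hAj]
    constructor
    · rintro (h | h | h)
      · have hli : ℓ = i := T.leaf.injective h
        exact Or.inl ⟨hli, fun hj => hij' (hli.symm.trans hj)⟩
      · have hlj : ℓ = j := T.leaf.injective h
        exact Or.inr ⟨fun hi => hij' (hi.symm.trans hlj), hlj⟩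
      · exact absurd h.symm (T.lca_ne_leaf hij' hℓ)
    · rintro (⟨rfl, _⟩ | ⟨_, rfl⟩)
      · exact Or.inl rfl
      · exact Or.inr (Or.inl rfl)
  simp only [Amat, Bmat, Matrix.of_apply]
  exact if_congr hiff rfl rfl

lemma key_row (v : T.NR) (hint : v.1 ∉ Set.range T.leaf) :
    (∑ w : T.NR, if T.par w.1 = v.1 then Bmat T ℚ w else 0)
      = (2 : ℚ) • Amat T ℚ v + Bmat T ℚ v := by
  funext s
  obtain ⟨⟨i, j⟩, hij⟩ := s
  have hij' : i ≠ j := ne_of_lt hij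
  have hvi : v.1 ≠ T.leaf i := fun h => hint ⟨i, h.symm⟩
  have hvj : v.1 ≠ T.leaf j := fun h => hint ⟨j, h.symm⟩
  have hv := v.2
  simp only [Finset.sum_apply, ite_apply, Pi.zero_apply, Pi.add_apply, Pi.smul_apply,
    smul_eq_mul, Amat, Bmat, Matrix.of_apply]
  by_cases hdi : T.isAnc v.1 (T.leaf i) <;> by_cases hdj : T.isAnc v.1 (T.leaf j)
  · -- both leaves below v
    have hvl : T.isAnc v.1 (T.lca i j) := T.anc_lca_iff.mpr ⟨hdi, hdj⟩
    have hop : ¬ T.onPath v.1 i j := by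
      intro h
      rcases T.onPath_iff.mp h with ⟨_, h2⟩ | ⟨h1, _⟩
      exacts [h2 hdj, h1 hdi]
    by_cases hveq : v.1 = T.lca i j
    · obtain ⟨wi, hwip, hwia⟩ := T.child_cover hdi (fun h => hvi h.symm)
      obtain ⟨wj, hwjp, hwja⟩ := T.child_cover hdj (fun h => hvj h.symm)
      have hwine : wi ≠ T.leaf 0 := fun h => hv (by rw [← hwip, h, T.par_root])
      have hwjne : wj ≠ T.leaf 0 := fun h => hv (by rw [← hwjp, h, T.par_root])
      have hnij : wi ≠ wj := by
        intro h
        apply T.not_anc_parent hwip hv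
        have hh : T.isAnc wi (T.lca i j) := T.anc_lca_iff.mpr ⟨hwia, by rw [h]; exact hwja⟩
        rw [← hveq] at hh; exact hh
      have honi : T.onPath wi i j := T.onPath_iff.mpr (Or.inl ⟨hwia, fun hc =>
        T.not_anc_parent hwip hv (by rw [hveq]; exact T.anc_lca_iff.mpr ⟨hwia, hc⟩)⟩)
      have honj : T.onPath wj i j := T.onPath_iff.mpr (Or.inr ⟨fun hc =>
        T.not_anc_parent hwjp hv (by rw [hveq]; exact T.anc_lca_iff.mpr ⟨hc, hwja⟩), hwja⟩)
      rw [if_pos (Or.inr (Or.inr hveq)), if_neg hop]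
      refine (Finset.sum_subset
        (Finset.subset_univ ({⟨wi, hwine⟩, ⟨wj, hwjne⟩} : Finset T.NR)) ?_).symm.trans ?_
      · intro x _ hx
        split_ifs with h1 h2
        · exfalso
          rcases T.onPath_iff.mp h2 with ⟨hx1, _⟩ | ⟨_, hx1⟩
          · exact hx (by rw [(Subtype.ext (T.child_unique hv h1 hwip hx1 hwia) : x = ⟨wi, hwine⟩)]; simp)
          · exact hx (by rw [(Subtype.ext (T.child_unique hv h1 hwjp hx1 hwja) : x = ⟨wj, hwjne⟩)]; simp)
        · rfl
        · rfl
      · rw [Finset.sum_pair (fun h => hnij (congrArg Subtype.val h))]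
        norm_num [hwip, hwjp, honi, honj]
    · obtain ⟨w0, hp0, ha0⟩ := T.child_cover hvl (Ne.symm hveq)
      have hai : T.isAnc w0 (T.leaf i) := T.isAnc_trans ha0 (T.lca_anc_left i j)
      have haj : T.isAnc w0 (T.leaf j) := T.isAnc_trans ha0 (T.lca_anc_right i j)
      have hcond : ¬(v.1 = T.leaf i ∨ v.1 = T.leaf j ∨ v.1 = T.lca i j) := by
        rintro (h | h | h)
        exacts [hvi h, hvj h, hveq h]
      rw [if_neg hcond, if_neg hop]
      refine (Finset.sum_eq_zero ?_).trans (by norm_num)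
      intro w _
      split_ifs with h1 h2
      · exfalso
        rcases T.onPath_iff.mp h2 with ⟨hx1, hx2⟩ | ⟨hx2, hx1⟩
        · have hww : w.1 = w0 := T.child_unique hv h1 hp0 hx1 hai
          exact hx2 (by rw [hww]; exact haj)
        · have hww : w.1 = w0 := T.child_unique hv h1 hp0 hx1 haj
          exact hx2 (by rw [hww]; exact hai)
      · rfl
      · rfl
  · -- i below, j not
    have hcond : ¬(v.1 = T.leaf i ∨ v.1 = T.leaf j ∨ v.1 = T.lca i j) := by
      rintro (h | h | h)
      exacts [hvi h, hvj h, hdj (by rw [h]; exact T.lca_anc_right i j)]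
    have hop : T.onPath v.1 i j := T.onPath_iff.mpr (Or.inl ⟨hdi, hdj⟩)
    obtain ⟨w0, hp0, ha0⟩ := T.child_cover hdi (fun h => hvi h.symm)
    have h0ne : w0 ≠ T.leaf 0 := fun h => hv (by rw [← hp0, h, T.par_root])
    have hop0 : T.onPath w0 i j := T.onPath_iff.mpr (Or.inl ⟨ha0, fun hc =>
      hdj (T.isAnc_trans ⟨1, by rw [Function.iterate_one]; exact hp0⟩ hc)⟩)
    rw [if_neg hcond, if_pos hop]
    refine (Finset.sum_eq_single (⟨w0, h0ne⟩ : T.NR) ?_ ?_).trans ?_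
    · intro b _ hb
      split_ifs with h1 h2
      · exfalso
        rcases T.onPath_iff.mp h2 with ⟨hx1, _⟩ | ⟨_, hx1⟩
        · exact hb (Subtype.ext (T.child_unique hv h1 hp0 hx1 ha0))
        · exact hdj (T.isAnc_trans ⟨1, by rw [Function.iterate_one]; exact h1⟩ hx1)
      · rfl
      · rfl
    · intro h; exact absurd (Finset.mem_univ _) h
    · norm_num [hp0, hop0]
  · -- j below, i not
    have hcond : ¬(v.1 = T.leaf i ∨ v.1 = T.leaf j ∨ v.1 = T.lca i j) := by
      rintro (h | h | h)
      exacts [hvi h, hvj h, hdi (by rw [h]; exact T.lca_anc_left i j)]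
    have hop : T.onPath v.1 i j := T.onPath_iff.mpr (Or.inr ⟨hdi, hdj⟩)
    obtain ⟨w0, hp0, ha0⟩ := T.child_cover hdj (fun h => hvj h.symm)
    have h0ne : w0 ≠ T.leaf 0 := fun h => hv (by rw [← hp0, h, T.par_root])
    have hop0 : T.onPath w0 i j := T.onPath_iff.mpr (Or.inr ⟨fun hc =>
      hdi (T.isAnc_trans ⟨1, by rw [Function.iterate_one]; exact hp0⟩ hc), ha0⟩)
    rw [if_neg hcond, if_pos hop]
    refine (Finset.sum_eq_single (⟨w0, h0ne⟩ : T.NR) ?_ ?_).trans ?_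
    · intro b _ hb
      split_ifs with h1 h2
      · exfalso
        rcases T.onPath_iff.mp h2 with ⟨hx1, _⟩ | ⟨_, hx1⟩
        · exact hdi (T.isAnc_trans ⟨1, by rw [Function.iterate_one]; exact h1⟩ hx1)
        · exact hb (Subtype.ext (T.child_unique hv h1 hp0 hx1 ha0))
      · rfl
      · rfl
    · intro h; exact absurd (Finset.mem_univ _) h
    · norm_num [hp0, hop0]
  · -- neither leaf below v
    have hcond : ¬(v.1 = T.leaf i ∨ v.1 = T.leaf j ∨ v.1 = T.lca i j) := by
      rintro (h | h | h)
      exacts [hvi h, hvj h, hdi (by rw [h]; exact T.lca_anc_left i j)]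
    have hop : ¬ T.onPath v.1 i j := by
      rintro ⟨_, _, h | h⟩
      exacts [hdi h, hdj h]
    rw [if_neg hcond, if_neg hop]
    refine (Finset.sum_eq_zero ?_).trans (by norm_num)
    intro w _
    split_ifs with h1 h2
    · exfalso
      rcases h2.2.2 with h | h
      · exact hdi (T.isAnc_trans ⟨1, by rw [Function.iterate_one]; exact h1⟩ h)
      · exact hdj (T.isAnc_trans ⟨1, by rw [Function.iterate_one]; exact h1⟩ h)
    · rfl
    · rfl

end PhyloTree

/-- For every rooted tree `T`, the rows of `A_T` and the rows of `B_T` span the same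
`ℚ`-linear subspace of the space of row vectors indexed by the 2-element subsets of
`{0, …, n}`. -/
theorem statement2 (T : PhyloTree) :
    Submodule.span ℚ (Set.range (Amat T ℚ)) = Submodule.span ℚ (Set.range (Bmat T ℚ)) := by
  apply le_antisymm
  · rw [Submodule.span_le]
    rintro x ⟨v, rfl⟩
    show Amat T ℚ v ∈ Submodule.span ℚ (Set.range (Bmat T ℚ))
    by_cases hleaf : v.1 ∈ Set.range T.leaf
    · obtain ⟨ℓ, hℓ⟩ := hleaf
      have hℓ0 : ℓ ≠ 0 := by rintro rfl; exact v.2 hℓ.symm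
      rw [T.row_leaf_eq hℓ0 v hℓ.symm]
      exact Submodule.subset_span ⟨v, rfl⟩
    · have hk := T.key_row v hleaf
      have hA : Amat T ℚ v = (2⁻¹ : ℚ) •
          ((∑ w : T.NR, if T.par w.1 = v.1 then Bmat T ℚ w else 0) - Bmat T ℚ v) := by
        rw [hk, add_sub_cancel_right, smul_smul]
        norm_num
      rw [hA]
      refine Submodule.smul_mem _ _ (Submodule.sub_mem _ ?_ (Submodule.subset_span ⟨v, rfl⟩))
      refine Submodule.sum_mem _ fun w _ => ?_
      by_cases hw : T.par w.1 = v.1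
      · rw [if_pos hw]; exact Submodule.subset_span ⟨w, rfl⟩
      · rw [if_neg hw]; exact Submodule.zero_mem _
  · rw [Submodule.span_le]
    have main : ∀ N : ℕ, ∀ v : T.NR,
        ((Finset.univ : Finset T.V).filter fun u => T.isAnc v.1 u).card ≤ N →
        Bmat T ℚ v ∈ Submodule.span ℚ (Set.range (Amat T ℚ)) := by
      intro N
      induction N with
      | zero =>
        intro v hv
        exfalso
        have hm : v.1 ∈ (Finset.univ : Finset T.V).filter (fun u => T.isAnc v.1 u) :=
          Finset.mem_filter.mpr ⟨Finset.mem_univ _, T.isAnc_refl _⟩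
        have := Finset.card_pos.mpr ⟨v.1, hm⟩
        omega
      | succ N ih =>
        intro v hv
        by_cases hleaf : v.1 ∈ Set.range T.leaf
        · obtain ⟨ℓ, hℓ⟩ := hleaf
          have hℓ0 : ℓ ≠ 0 := by rintro rfl; exact v.2 hℓ.symm
          rw [← T.row_leaf_eq hℓ0 v hℓ.symm]
          exact Submodule.subset_span ⟨v, rfl⟩
        · have hk := T.key_row v hleaf
          have hB : Bmat T ℚ v
              = (∑ w : T.NR, if T.par w.1 = v.1 then Bmat T ℚ w else 0)
                - (2 : ℚ) • Amat T ℚ v := by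
            rw [hk, add_sub_cancel_left]
          rw [hB]
          refine Submodule.sub_mem _ (Submodule.sum_mem _ fun w _ => ?_)
            (Submodule.smul_mem _ _ (Submodule.subset_span ⟨v, rfl⟩))
          by_cases hw : T.par w.1 = v.1
          · rw [if_pos hw]
            apply ih
            have hsub : ((Finset.univ : Finset T.V).filter fun u => T.isAnc w.1 u)
                ⊆ (Finset.univ : Finset T.V).filter fun u => T.isAnc v.1 u := by
              intro u hu
              rw [Finset.mem_filter] at hu ⊢
              exact ⟨hu.1,
                T.isAnc_trans ⟨1, by rw [Function.iterate_one]; exact hw⟩ hu.2⟩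
            have hvmem : v.1 ∈ (Finset.univ : Finset T.V).filter fun u => T.isAnc v.1 u :=
              Finset.mem_filter.mpr ⟨Finset.mem_univ _, T.isAnc_refl _⟩
            have hvnot : v.1 ∉ (Finset.univ : Finset T.V).filter fun u => T.isAnc w.1 u := by
              rw [Finset.mem_filter]
              rintro ⟨_, h⟩
              exact T.not_anc_parent hw v.2 h
            have hcard := Finset.card_lt_card
              ((Finset.ssubset_iff_of_subset hsub).mpr ⟨v.1, hvmem, hvnot⟩)
            omega
          · rw [if_neg hw]; exact Submodule.zero_mem _
    rintro x ⟨v, rfl⟩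
    exact main _ v le_rfl
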